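/- Every ε-PCE respects player compatibility in the following sense: if σ° is an ε-equilibrium for a player-compatible tremble profile ε and s_i* ≿ s_j*, then σ°_i(s_i*) ≥ min( σ°_j(s_j*), 1 − Σ_{s_i' ≠ s_i*} ε(s_i' | i) ). -/

import Mathlib

open scoped Classical

noncomputable section

variable {ι : Type} [Fintype ι] [DecidableEq ι] {S : ι → Type} [∀ i, Fintype (S i)]

/-- A full-support correlated strategy profile on `S = ∏ i, S i`. -/
def FullSupport (σ : (∀ i, S i) → ℝ) : Prop :=
  (∀ s, 0 < σ s) ∧ ∑ s, σ s = 1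

/-- Expected payoff to player `i` from playing `si` against the correlated profile `σ`. -/
def expPay (U : ι → (∀ j, S j) → ℝ) (i : ι) (si : S i) (σ : (∀ j, S j) → ℝ) : ℝ :=
  ∑ s, σ s * U i (Function.update s i si)

/-- `σ` and `τ` have the same marginal on the strategies of players other than `i` and `j`. -/
def SameMarginal (i j : ι) (σ τ : (∀ k, S k) → ℝ) : Prop :=
  ∀ s : ∀ k, S k,
    (∑ si : S i, ∑ sj : S j, σ (Function.update (Function.update s i si) j sj)) =
    (∑ si : S i, ∑ sj : S j, τ (Function.update (Function.update s i si) j sj))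

/-- Player `i` is more compatible with `si` than player `j` is with `sj`. -/
def MoreCompatible (U : ι → (∀ j, S j) → ℝ) (i j : ι) (si : S i) (sj : S j) : Prop :=
  ∀ σ : (∀ k, S k) → ℝ, FullSupport σ →
    (∀ sj' : S j, expPay U j sj' σ ≤ expPay U j sj σ) →
    ∀ τ : (∀ k, S k) → ℝ, FullSupport τ → SameMarginal i j σ τ →
      ∀ si' : S i, si' ≠ si → expPay U i si' τ < expPay U i si τ

/-- Expected payoff to `i` under an independent mixed strategy profile `μ`. -/
def profPay (U : ι → (∀ j, S j) → ℝ) (i : ι) (μ : ∀ j, S j → ℝ) : ℝ :=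
  ∑ s : ∀ j, S j, (∏ j, μ j (s j)) * U i s

/-- `μi` is an `ε`-strategy for player `i`: a mixed strategy putting at least `ε i si`
on each pure strategy `si`. -/
def InTrembleSet (ε : ∀ i, S i → ℝ) (i : ι) (μi : S i → ℝ) : Prop :=
  (∑ si, μi si = 1) ∧ ∀ si, ε i si ≤ μi si

/-- `μ` is an `ε`-equilibrium: each player's strategy maximizes her payoff over `ε`-strategies. -/
def IsEpsEquilibrium (U : ι → (∀ j, S j) → ℝ) (ε : ∀ i, S i → ℝ) (μ : ∀ i, S i → ℝ) : Prop :=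
  (∀ i, InTrembleSet ε i (μ i)) ∧
  ∀ (i : ι) (τi : S i → ℝ), InTrembleSet ε i τi →
    profPay U i (Function.update μ i τi) ≤ profPay U i μ

/-- A player-compatible tremble profile: positive trembles whose magnitudes respect
the compatibility relation. -/
def PlayerCompatibleTremble (U : ι → (∀ j, S j) → ℝ) (ε : ∀ i, S i → ℝ) : Prop :=
  (∀ i si, 0 < ε i si) ∧
  ∀ (i j : ι) (si : S i) (sj : S j), i ≠ j → MoreCompatible U i j si sj → ε j sj ≤ ε i si

/-- `σstar` is a player-compatible equilibrium: a limit of `ε⁽ᵗ⁾`-equilibria along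
player-compatible tremble profiles `ε⁽ᵗ⁾ → 0`. -/
def IsPCE (U : ι → (∀ j, S j) → ℝ) (σstar : ∀ i, S i → ℝ) : Prop :=
  ∃ (ε : ℕ → ∀ i, S i → ℝ) (σ : ℕ → ∀ i, S i → ℝ),
    (∀ t, PlayerCompatibleTremble U (ε t)) ∧
    (∀ i si, Filter.Tendsto (fun t => ε t i si) Filter.atTop (nhds 0)) ∧
    (∀ t, IsEpsEquilibrium U (ε t) (σ t)) ∧
    (∀ i si, Filter.Tendsto (fun t => σ t i si) Filter.atTop (nhds (σstar i si)))

/-! In an `ε`-equilibrium a strategy that is strictly worse than another is played with exactly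
its tremble, since otherwise shifting the excess mass would pay. If `σ°ᵢ(s_i*)` is below the cap
`1 − Σ_{s_i' ≠ s_i*} ε(s_i'|i)`, some other strategy of `i` gets more than its tremble, so `s_i*` is
not a strict best response against the full-support product profile `σ°`. By compatibility `s_j*`
is then not a weak best response of `j`, hence `σ°ⱼ(s_j*) = ε(s_j*|j) ≤ ε(s_i*|i) ≤ σ°ᵢ(s_i*)`. -/

open Finset

def productProfile (μ : ∀ i, S i → ℝ) (s : ∀ i, S i) : ℝ :=
  ∏ k, μ k (s k)

/-- `U_i(a, μ_{-i})`, written as a sum over the profiles with `s i = a`. -/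
def purePay (U : ι → (∀ j, S j) → ℝ) (i : ι) (μ : ∀ k, S k → ℝ) (a : S i) : ℝ :=
  ∑ s with s i = a, (∏ k ∈ univ.erase i, μ k (s k)) * U i s

lemma fullSupport_productProfile {μ : ∀ i, S i → ℝ} (hpos : ∀ k x, 0 < μ k x)
    (hsum : ∀ k, ∑ x, μ k x = 1) : FullSupport (productProfile μ) :=
  ⟨fun s => prod_pos fun k _ => hpos k (s k), by
    simp only [productProfile, ← Fintype.prod_sum, hsum, prod_const_one]⟩

lemma sum_filter_update {M : Type*} [AddCommMonoid M] (F : (∀ k, S k) → M) (i : ι) (a b : S i) :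
    ∑ s with s i = a, F (Function.update s i b) = ∑ s with s i = b, F s := by
  refine sum_nbij' (Function.update · i b) (Function.update · i a) (by simp) (by simp)
    ?_ ?_ fun _ _ => rfl
  all_goals
    intro s hs
    rw [Function.update_idem, Function.update_eq_self_iff]
    exact ((mem_filter.1 hs).2).symm

lemma prod_erase_update {β : ι → Type*} {M : Type*} [CommMonoid M] (f : ∀ k, β k → M)
    (s : ∀ k, β k) (i : ι) (x : β i) :
    ∏ k ∈ univ.erase i, f k (Function.update s i x k) = ∏ k ∈ univ.erase i, f k (s k) :=
  prod_congr rfl fun _ hk => by rw [Function.update_of_ne (ne_of_mem_erase hk)]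

lemma profPay_update (U : ι → (∀ j, S j) → ℝ) (i : ι) (μ : ∀ k, S k → ℝ) (τ : S i → ℝ) :
    profPay U i (Function.update μ i τ) = ∑ a, τ a * purePay U i μ a := by
  have hsplit (s : ∀ k, S k) : (∏ k, Function.update μ i τ k (s k)) * U i s
      = τ (s i) * ((∏ k ∈ univ.erase i, μ k (s k)) * U i s) := by
    rw [← mul_prod_erase univ _ (mem_univ i), Function.update_self, mul_assoc]
    congr 2
    exact prod_congr rfl fun k hk => by rw [Function.update_of_ne (ne_of_mem_erase hk)]
  simp_rw [profPay, hsplit, purePay, mul_sum]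
  rw [← sum_fiberwise univ (fun s : ∀ k, S k => s i)]
  exact sum_congr rfl fun a _ => sum_congr rfl fun s hs => by rw [(mem_filter.1 hs).2]

lemma expPay_productProfile (U : ι → (∀ j, S j) → ℝ) (i : ι) (μ : ∀ k, S k → ℝ)
    (hμ : ∑ x, μ i x = 1) (a : S i) :
    expPay U i a (productProfile μ) = purePay U i μ a := by
  set g : (∀ k, S k) → ℝ := fun t => (∏ k ∈ univ.erase i, μ k (t k)) * U i t
  have hsplit (s : ∀ k, S k) :
      productProfile μ s * U i (Function.update s i a) = μ i (s i) * g (Function.update s i a) := by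
    rw [productProfile, ← mul_prod_erase univ _ (mem_univ i), mul_assoc]
    simp only [g, prod_erase_update]
  simp_rw [expPay, hsplit]
  rw [← sum_fiberwise univ (fun s : ∀ k, S k => s i)]
  calc ∑ x, ∑ s with s i = x, μ i (s i) * g (Function.update s i a)
      = ∑ x, μ i x * purePay U i μ a := by
        refine sum_congr rfl fun x _ => ?_
        rw [purePay, ← sum_filter_update g i x a, mul_sum]
        exact sum_congr rfl fun s hs => by rw [(mem_filter.1 hs).2]
    _ = purePay U i μ a := by rw [← sum_mul, hμ, one_mul]

lemma le_of_forall_sum_mul_le {α : Type*} [Fintype α] {e p V : α → ℝ}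
    (hp : ∑ x, p x = 1) (hep : ∀ x, e x ≤ p x)
    (hopt : ∀ q : α → ℝ, ∑ x, q x = 1 → (∀ x, e x ≤ q x) → ∑ x, q x * V x ≤ ∑ x, p x * V x)
    {a b : α} (hlt : V b < V a) : p b ≤ e b := by
  by_contra! hgt
  have hab : a ≠ b := by rintro rfl; exact lt_irrefl _ hlt
  set δ := p b - e b
  -- move the excess mass of `b` onto `a`
  let q := p + Pi.single a δ - Pi.single b δ
  have hq : ∑ x, q x = 1 := by simp [q, sum_add_distrib, sum_sub_distrib, hp]
  have hqe (x : α) : e x ≤ q x := by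
    rcases eq_or_ne x b with rfl | hxb
    · simp [q, δ, hab]
    · have := hep x
      simp only [q, Pi.add_apply, Pi.sub_apply, Pi.single_apply, hxb, if_false, sub_zero]
      split_ifs <;> linarith
  have hgain : ∑ x, q x * V x = ∑ x, p x * V x + δ * (V a - V b) := by
    simp [q, add_mul, sub_mul, sum_add_distrib, sum_sub_distrib, Pi.single_apply]
    ring
  have := mul_pos (sub_pos.2 hgt) (sub_pos.2 hlt)
  linarith [hopt q hq hqe]

lemma exists_ne_lt_of_lt_one_sub {α : Type*} [Fintype α] [DecidableEq α] {e p : α → ℝ}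
    (hp : ∑ x, p x = 1) {a : α} (ha : p a < 1 - ∑ x ∈ univ.erase a, e x) :
    ∃ b ≠ a, e b < p b := by
  by_contra! h
  have hsplit := add_sum_erase univ p (mem_univ a)
  have := sum_le_sum fun x (hx : x ∈ univ.erase a) => h x (ne_of_mem_erase hx)
  linarith

lemma IsEpsEquilibrium.le_of_expPay_lt {U : ι → (∀ j, S j) → ℝ} {ε μ : ∀ i, S i → ℝ}
    (heq : IsEpsEquilibrium U ε μ) {k : ι} {a b : S k}
    (hlt : expPay U k b (productProfile μ) < expPay U k a (productProfile μ)) :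
    μ k b ≤ ε k b := by
  have hpay (τ : S k → ℝ) : profPay U k (Function.update μ k τ)
      = ∑ x, τ x * expPay U k x (productProfile μ) := by
    simp_rw [profPay_update, expPay_productProfile U k μ (heq.1 k).1]
  refine le_of_forall_sum_mul_le (V := fun x => expPay U k x (productProfile μ))
    (heq.1 k).1 (heq.1 k).2 (fun τ hτsum hτ => ?_) hlt
  calc ∑ x, τ x * expPay U k x (productProfile μ) = profPay U k (Function.update μ k τ) :=
        (hpay τ).symm
    _ ≤ profPay U k μ := heq.2 k τ ⟨hτsum, hτ⟩
    _ = _ := by rw [← hpay, Function.update_eq_self]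

/-- Every `ε`-PCE respects player compatibility (Lemma in the Appendix):
if `σ°` is an `ε`-equilibrium for a player-compatible tremble profile `ε` and
`s_i* ≿ s_j*`, then `σ°ᵢ(s_i*) ≥ min(σ°ⱼ(s_j*), 1 − Σ_{s_i' ≠ s_i*} ε(s_i'|i))`. -/
theorem epsPCE_respects_compatibility
    (U : ι → (∀ j, S j) → ℝ) (ε : ∀ i, S i → ℝ) (μ : ∀ i, S i → ℝ)
    (hε : PlayerCompatibleTremble U ε)
    (heq : IsEpsEquilibrium U ε μ)
    (i j : ι) (hij : i ≠ j) (sistar : S i) (sjstar : S j)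
    (hcompat : MoreCompatible U i j sistar sjstar) :
    min (μ j sjstar) (1 - ∑ si' ∈ Finset.univ.erase sistar, ε i si') ≤ μ i sistar := by
  obtain ⟨hpos, hmono⟩ := hε
  have hσ : FullSupport (productProfile μ) := fullSupport_productProfile
    (fun k x => (hpos k x).trans_le ((heq.1 k).2 x)) fun k => (heq.1 k).1
  rcases le_or_gt (1 - ∑ si' ∈ univ.erase sistar, ε i si') (μ i sistar) with hcap | hcap
  · exact (min_le_right _ _).trans hcap
  obtain ⟨si, hne, hsi⟩ := exists_ne_lt_of_lt_one_sub (heq.1 i).1 hcap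
  set σ := productProfile μ
  have hsi_best : expPay U i sistar σ ≤ expPay U i si σ :=
    not_lt.1 fun h => (heq.le_of_expPay_lt h).not_gt hsi
  obtain ⟨sj, hsj⟩ : ∃ sj, expPay U j sjstar σ < expPay U j sj σ := by
    by_contra! hbest
    exact (hcompat σ hσ hbest σ hσ (fun _ => rfl) si hne).not_ge hsi_best
  calc min (μ j sjstar) (1 - ∑ si' ∈ univ.erase sistar, ε i si')
      ≤ μ j sjstar := min_le_left _ _
    _ ≤ ε j sjstar := heq.le_of_expPay_lt hsj
    _ ≤ ε i sistar := hmono i j sistar sjstar hij hcompat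
    _ ≤ μ i sistar := (heq.1 i).2 sistar

end
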